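/- Let F : ℝ^{d₁} → ℝ be differentiable with L_F-Lipschitz gradient and Φ = F + h. Let x_t ∈ 𝒳, w, u ∈ ℝ^{d₁}, L_y ≥ 0 and δ ≥ 0 with ‖u − ∇F(x_t)‖ ≤ L_y δ, and 0 < γ ≤ 3ρ/(4L_F). Let x_{t+1} be the unique minimizer over 𝒳 of x ↦ ⟨w, x⟩ + h(x) + (1/γ)D_ψ(x, x_t), let x⁺_{t+1} be the unique minimizer over 𝒳 of x ↦ ⟨∇F(x_t), x⟩ + h(x) + (1/γ)D_ψ(x, x_t), and set G = (x_t − x⁺_{t+1})/γ. Then Φ(x_{t+1}) ≤ Φ(x_t) − (3γρ/16)‖G‖² + (11γ/(4ρ))‖w − u‖² + (11L_y²γ/(4ρ))δ². -/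

import Mathlib

open scoped RealInnerProductSpace

variable {d₁ : ℕ}

local notation "E₁" => EuclideanSpace ℝ (Fin d₁)

/-!
The step `x_{t+1}` minimises a `ρ/γ`-strongly convex function over `𝒳`, so comparing its value
with the one at `x_t`, and using `D_ψ(x_{t+1}, x_t) ≥ ρ/2 ‖x_{t+1} - x_t‖²`, gives
`⟨w, x_{t+1} - x_t⟩ + h(x_{t+1}) - h(x_t) ≤ -(ρ/γ) ‖x_{t+1} - x_t‖²`. Together with the descent
lemma for `F` and `L_F ≤ 3ρ/(4γ)` this yields
`Φ(x_{t+1}) ≤ Φ(x_t) + ‖w - ∇F(x_t)‖ a - 5ρ/(8γ) a²` with `a = ‖x_{t+1} - x_t‖`.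
The two prox steps differ only by the linear term `⟨w - ∇F(x_t), ·⟩`, so their minimisers are
`(γ/ρ) ‖w - ∇F(x_t)‖`-close; hence `γ ‖G‖ ≤ a + (γ/ρ) ‖w - ∇F(x_t)‖`. Young's inequality and
`‖w - ∇F(x_t)‖ ≤ ‖w - u‖ + L_y δ` finish the computation.
-/

open Set Filter Topology

lemma ConvexOn.apply_add_fderiv_sub_le {E : Type*} [NormedAddCommGroup E] [NormedSpace ℝ E]
    {s : Set E} {f : E → ℝ} {f' : E →L[ℝ] ℝ} {x y : E}
    (hf : ConvexOn ℝ s f) (hx : x ∈ s) (hy : y ∈ s) (hf' : HasFDerivAt f f' x) :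
    f x + f' (y - x) ≤ f y := by
  let ℓ := AffineMap.lineMap (k := ℝ) x y
  have hℓ : HasDerivAt (f ∘ ℓ) (f' (y - x)) 0 :=
    (by simpa [ℓ] using hf' : HasFDerivAt f f' (ℓ 0)).comp_hasDerivAt 0
      AffineMap.hasDerivAt_lineMap
  have hslope := (hf.comp_affineMap ℓ).le_slope_of_hasDerivAt (by simpa [ℓ]) (by simpa [ℓ])
    zero_lt_one hℓ
  simp only [slope, ℓ, Function.comp_apply, AffineMap.lineMap_apply_zero,
    AffineMap.lineMap_apply_one, sub_zero, inv_one, one_smul, vsub_eq_sub] at hslope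
  linarith

section StrongConvexity

variable {E : Type*} [NormedAddCommGroup E] [InnerProductSpace ℝ E]
  {s t : Set E} {f g : E → ℝ} {m : ℝ}

lemma StrongConvexOn.subset (hf : StrongConvexOn t m f) (hst : s ⊆ t) (hs : Convex ℝ s) :
    StrongConvexOn s m f :=
  ⟨hs, fun _ hx _ hy => hf.2 (hst hx) (hst hy)⟩

lemma ConvexOn.add_strongConvexOn (hg : ConvexOn ℝ s g) (hf : StrongConvexOn s m f) :
    StrongConvexOn s m (g + f) := by
  simpa [StrongConvexOn] using (uniformConvexOn_zero.2 hg).add hf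

lemma StrongConvexOn.sub_concaveOn (hf : StrongConvexOn s m f) (hg : ConcaveOn ℝ s g) :
    StrongConvexOn s m (f - g) := by
  simpa [StrongConvexOn] using hf.sub (uniformConcaveOn_zero.2 hg)

lemma StrongConvexOn.const_mul (hf : StrongConvexOn s m f) {c : ℝ} (hc : 0 ≤ c) :
    StrongConvexOn s (c * m) fun x => c * f x := by
  rw [strongConvexOn_iff_convex] at hf ⊢
  refine (hf.smul hc).congr fun x _ => ?_
  simp only [smul_eq_mul]
  ring

lemma StrongConvexOn.add_sq_le_of_isMinOn (hf : StrongConvexOn s m f) {x y : E}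
    (hmin : IsMinOn f s x) (hx : x ∈ s) (hy : y ∈ s) :
    f x + m / 2 * ‖y - x‖ ^ 2 ≤ f y := by
  have key : ∀ a ∈ Ioo (0 : ℝ) 1, f x + a * (m / 2 * ‖y - x‖ ^ 2) ≤ f y := by
    intro a ⟨ha₀, ha₁⟩
    have hle : f x ≤ f (a • x + (1 - a) • y) :=
      hmin (hf.1 hx hy ha₀.le (sub_nonneg.2 ha₁.le) (add_sub_cancel a 1))
    have hconv := hf.2 hx hy ha₀.le (sub_nonneg.2 ha₁.le) (add_sub_cancel a 1)
    rw [norm_sub_rev, smul_eq_mul, smul_eq_mul] at hconv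
    refine le_of_mul_le_mul_left ?_ (sub_pos.2 ha₁)
    linear_combination hle + hconv
  -- dividing by `1 - a` needs `a < 1`; the case `a = 1` is recovered as a limit
  have hcont : Continuous fun a : ℝ => f x + a * (m / 2 * ‖y - x‖ ^ 2) := by fun_prop
  refine le_of_tendsto ((hcont.tendsto' 1 _ (by simp)).mono_left
    (nhdsWithin_le_nhds (s := Iio 1))) ?_
  filter_upwards [Ioo_mem_nhdsLT (zero_lt_one' ℝ)] using key

lemma StrongConvexOn.norm_sub_le_of_isMinOn {f₁ f₂ : E → ℝ} {v x₁ x₂ : E}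
    (hf₁ : StrongConvexOn s m f₁) (hf₂ : StrongConvexOn s m f₂) (hm : 0 < m)
    (hv : ∀ y, f₁ y = f₂ y + ⟪v, y⟫) (h₁ : IsMinOn f₁ s x₁) (h₂ : IsMinOn f₂ s x₂)
    (hx₁ : x₁ ∈ s) (hx₂ : x₂ ∈ s) :
    ‖x₁ - x₂‖ ≤ ‖v‖ / m := by
  have e₁ := hf₁.add_sq_le_of_isMinOn h₁ hx₁ hx₂
  have e₂ := hf₂.add_sq_le_of_isMinOn h₂ hx₂ hx₁
  have hcs : ⟪v, x₂ - x₁⟫ ≤ ‖v‖ * ‖x₁ - x₂‖ := by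
    simpa [norm_sub_rev] using real_inner_le_norm v (x₂ - x₁)
  rw [hv, hv, norm_sub_rev x₂] at e₁
  rw [inner_sub_right] at hcs
  have hsq : m * ‖x₁ - x₂‖ * ‖x₁ - x₂‖ ≤ ‖v‖ * ‖x₁ - x₂‖ := by nlinarith
  rw [le_div_iff₀ hm, mul_comm]
  rcases (norm_nonneg (x₁ - x₂)).eq_or_lt with h0 | hpos
  · rw [← h0, mul_zero]; exact norm_nonneg v
  · exact le_of_mul_le_mul_right hsq hpos

end StrongConvexity

section Smooth

variable {E : Type*} [NormedAddCommGroup E] [InnerProductSpace ℝ E] [CompleteSpace E]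
  {s : Set E} {f : E → ℝ} {m : ℝ}

lemma StrongConvexOn.add_inner_add_sq_le_of_hasGradientAt {g x y : E}
    (hf : StrongConvexOn s m f) (hx : x ∈ s) (hy : y ∈ s) (hg : HasGradientAt f g x) :
    f x + ⟪g, y - x⟫ + m / 2 * ‖y - x‖ ^ 2 ≤ f y := by
  have hderiv := hg.hasFDerivAt.sub ((hasStrictFDerivAt_norm_sq x).hasFDerivAt.const_mul (m / 2))
  have h := (strongConvexOn_iff_convex.1 hf).apply_add_fderiv_sub_le hx hy hderiv
  simp only [sub_apply, smul_apply, InnerProductSpace.toDual_apply_apply, innerSL_apply_apply,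
    smul_eq_mul, nsmul_eq_mul] at h
  have hsq := norm_sub_sq_real y x
  have hinner : ⟪x, y - x⟫ = ⟪y, x⟫ - ‖x‖ ^ 2 := by
    rw [inner_sub_right, real_inner_comm, real_inner_self_eq_norm_sq]
  linear_combination h + m / 2 * hsq + m * hinner

lemma HasGradientAt.hasDerivAt_comp_add_smul {g x d : E} {t : ℝ}
    (hf : HasGradientAt f g (x + t • d)) :
    HasDerivAt (fun τ : ℝ => f (x + τ • d)) ⟪g, d⟫ t := by
  have := hf.hasFDerivAt.comp_hasDerivAt t (((hasDerivAt_id t).smul_const d).const_add x)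
  simpa [Function.comp_def] using this

lemma le_add_inner_add_sq_of_gradient_lipschitz {g : E → E} {L : ℝ}
    (hf : ∀ x, HasGradientAt f (g x) x) (hL : ∀ x y, ‖g x - g y‖ ≤ L * ‖x - y‖) (x y : E) :
    f y ≤ f x + ⟪g x, y - x⟫ + L / 2 * ‖y - x‖ ^ 2 := by
  set d := y - x
  let φ : ℝ → ℝ := fun t => f (x + t • d) - t * ⟪g x, d⟫ - L / 2 * ‖d‖ ^ 2 * t ^ 2
  have hφ' (t : ℝ) : HasDerivAt φ (⟪g (x + t • d) - g x, d⟫ - L * ‖d‖ ^ 2 * t) t := by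
    have := (((hf (x + t • d)).hasDerivAt_comp_add_smul).sub
      ((hasDerivAt_id t).mul_const ⟪g x, d⟫)).sub ((hasDerivAt_pow 2 t).const_mul (L / 2 * ‖d‖ ^ 2))
    refine this.congr_deriv ?_
    rw [inner_sub_left]
    ring
  have hφ'_le (t : ℝ) (ht : 0 ≤ t) : ⟪g (x + t • d) - g x, d⟫ ≤ L * ‖d‖ ^ 2 * t := by
    have hlip : ‖g (x + t • d) - g x‖ ≤ L * (t * ‖d‖) := by
      simpa [norm_smul, abs_of_nonneg ht] using hL (x + t • d) x
    calc ⟪g (x + t • d) - g x, d⟫ ≤ ‖g (x + t • d) - g x‖ * ‖d‖ := real_inner_le_norm _ _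
      _ ≤ L * (t * ‖d‖) * ‖d‖ := by gcongr
      _ = L * ‖d‖ ^ 2 * t := by ring
  have hanti : AntitoneOn φ (Icc 0 1) :=
    antitoneOn_of_hasDerivWithinAt_nonpos (convex_Icc 0 1)
      (fun t _ => (hφ' t).continuousAt.continuousWithinAt)
      (fun t _ => (hφ' t).hasDerivWithinAt)
      (fun t ht => sub_nonpos.2 (hφ'_le t (interior_subset ht).1))
  have h01 := hanti (left_mem_Icc.2 zero_le_one) (right_mem_Icc.2 zero_le_one) zero_le_one
  simp only [φ, zero_smul, add_zero, one_smul, zero_mul, sub_zero, one_pow, mul_one] at h01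
  simp only [d, add_sub_cancel] at h01 ⊢
  linarith

end Smooth

lemma mul_le_div_mul_sq_add_div_mul_sq {k l : ℝ} (hk : 0 < k) (hl : 0 < l) (x y : ℝ) :
    x * y ≤ k / (4 * l) * x ^ 2 + l / k * y ^ 2 := by
  have hsq : k / (4 * l) * x ^ 2 + l / k * y ^ 2 - x * y =
      (k * x - 2 * l * y) ^ 2 / (4 * k * l) := by
    field_simp
    ring
  have := div_nonneg (sq_nonneg (k * x - 2 * l * y)) (by positivity : (0 : ℝ) ≤ 4 * k * l)
  linarith

section MirrorStep

variable {E : Type*} [NormedAddCommGroup E] [InnerProductSpace ℝ E]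
  {s : Set E} {h ψ : E → ℝ} {gψ : E → E} {ρ γ : ℝ}

def bregmanDiv (ψ : E → ℝ) (gψ : E → E) (x z : E) : ℝ :=
  ψ x - ψ z - ⟪gψ z, x - z⟫

noncomputable def mirrorProxObjective (h ψ : E → ℝ) (gψ : E → E) (γ : ℝ) (z v y : E) : ℝ :=
  ⟪v, y⟫ + h y + 1 / γ * bregmanDiv ψ gψ y z

lemma strongConvexOn_bregmanDiv (hψ : StrongConvexOn s ρ ψ) (z : E) :
    StrongConvexOn s ρ (bregmanDiv ψ gψ · z) := by
  have hlin : ConcaveOn ℝ s fun x => ψ z + ⟪gψ z, x - z⟫ :=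
    (((innerSL ℝ (gψ z)).toLinearMap.concaveOn hψ.1).add_const (ψ z - ⟪gψ z, z⟫)).congr
      fun x _ => by
        simp only [ContinuousLinearMap.toLinearMap_innerSL_apply, coe_innerₛₗ_apply,
          Pi.add_apply, inner_sub_right]
        ring
  convert hψ.sub_concaveOn hlin using 1
  funext x
  exact sub_sub _ _ _

lemma strongConvexOn_mirrorProxObjective (hψ : StrongConvexOn s ρ ψ) (hh : ConvexOn ℝ s h)
    (hγ : 0 < γ) (z v : E) :
    StrongConvexOn s (ρ / γ) (mirrorProxObjective h ψ gψ γ z v) := by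
  have hlin : ConvexOn ℝ s fun y => ⟪v, y⟫ + h y :=
    ((innerSL ℝ v).toLinearMap.convexOn hψ.1).add hh
  convert hlin.add_strongConvexOn
    ((strongConvexOn_bregmanDiv (gψ := gψ) hψ z).const_mul (one_div_pos.2 hγ).le) using 1
  · ring
  · rfl

variable [CompleteSpace E]

lemma StrongConvexOn.sq_le_bregmanDiv {x z : E} (hψ : StrongConvexOn s ρ ψ)
    (hgψ : HasGradientAt ψ (gψ z) z) (hx : x ∈ s) (hz : z ∈ s) :
    ρ / 2 * ‖x - z‖ ^ 2 ≤ bregmanDiv ψ gψ x z := by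
  have := hψ.add_inner_add_sq_le_of_hasGradientAt hz hx hgψ
  rw [bregmanDiv]
  linarith

lemma inner_add_add_sq_le_of_isMinOn_mirrorProxObjective {v x z : E}
    (hψ : StrongConvexOn s ρ ψ) (hgψ : HasGradientAt ψ (gψ z) z) (hh : ConvexOn ℝ s h)
    (hγ : 0 < γ) (hmin : IsMinOn (mirrorProxObjective h ψ gψ γ z v) s x) (hx : x ∈ s)
    (hz : z ∈ s) :
    ⟪v, x⟫ + h x + ρ / γ * ‖x - z‖ ^ 2 ≤ ⟪v, z⟫ + h z := by
  have hopt := (strongConvexOn_mirrorProxObjective hψ hh hγ z v).add_sq_le_of_isMinOn hmin hx hz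
  have hD := mul_le_mul_of_nonneg_left (hψ.sq_le_bregmanDiv hgψ hx hz) (one_div_pos.2 hγ).le
  simp only [mirrorProxObjective, bregmanDiv, sub_self, inner_zero_right, mul_zero, add_zero,
    norm_sub_rev z x] at hopt hD
  linear_combination hopt + hD

lemma add_le_of_isMinOn_mirrorProxObjective {F : E → ℝ} {gradF : E → E} {L : ℝ} {w x z : E}
    (hF : ∀ x, HasGradientAt F (gradF x) x) (hFLip : ∀ x y, ‖gradF x - gradF y‖ ≤ L * ‖x - y‖)
    (hψ : StrongConvexOn s ρ ψ) (hgψ : HasGradientAt ψ (gψ z) z) (hh : ConvexOn ℝ s h)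
    (hγ : 0 < γ) (hmin : IsMinOn (mirrorProxObjective h ψ gψ γ z w) s x) (hx : x ∈ s)
    (hz : z ∈ s) :
    F x + h x ≤ F z + h z + ‖w - gradF z‖ * ‖x - z‖ - (ρ / γ - L / 2) * ‖x - z‖ ^ 2 := by
  have hdescent := le_add_inner_add_sq_of_gradient_lipschitz hF hFLip z x
  have hstep := inner_add_add_sq_le_of_isMinOn_mirrorProxObjective hψ hgψ hh hγ hmin hx hz
  have hcs : ⟪gradF z - w, x - z⟫ ≤ ‖w - gradF z‖ * ‖x - z‖ := by
    simpa [norm_sub_rev] using real_inner_le_norm (gradF z - w) (x - z)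
  have hsplit : ⟪gradF z, x - z⟫ = ⟪gradF z - w, x - z⟫ + ⟪w, x⟫ - ⟪w, z⟫ := by
    simp only [inner_sub_left, inner_sub_right]
    ring
  linear_combination hdescent + hstep + hcs + hsplit

end MirrorStep

theorem mirror_descent_objective_decrease_exact_gradient_general
    (ρ LF : ℝ) (hρ : 0 < ρ)
    (F : E₁ → ℝ) (gradF : E₁ → E₁)
    (hF : ∀ x, HasGradientAt F (gradF x) x)
    (hFLip : ∀ x₁ x₂ : E₁, ‖gradF x₁ - gradF x₂‖ ≤ LF * ‖x₁ - x₂‖)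
    (ψ : E₁ → ℝ) (gψ : E₁ → E₁)
    (hψdiff : ∀ x, HasGradientAt ψ (gψ x) x)
    (hψsc : StrongConvexOn Set.univ ρ ψ)
    (X : Set E₁) (hXcv : Convex ℝ X)
    (h : E₁ → ℝ) (hh : ConvexOn ℝ Set.univ h)
    (xt : E₁) (hxt : xt ∈ X) (w u : E₁)
    (Ly δ : ℝ)
    (hu : ‖u - gradF xt‖ ≤ Ly * δ)
    (γ : ℝ) (hγ : 0 < γ) (hγLF : γ ≤ 3 * ρ / (4 * LF))
    (xt1 : E₁) (hxt1 : xt1 ∈ X)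
    (hxt1min : ∀ z ∈ X,
      ⟪w, xt1⟫ + h xt1 + 1 / γ * (ψ xt1 - ψ xt - ⟪gψ xt, xt1 - xt⟫) ≤
        ⟪w, z⟫ + h z + 1 / γ * (ψ z - ψ xt - ⟪gψ xt, z - xt⟫))
    (xp : E₁) (hxp : xp ∈ X)
    (hxpmin : ∀ z ∈ X,
      ⟪gradF xt, xp⟫ + h xp + 1 / γ * (ψ xp - ψ xt - ⟪gψ xt, xp - xt⟫) ≤
        ⟪gradF xt, z⟫ + h z + 1 / γ * (ψ z - ψ xt - ⟪gψ xt, z - xt⟫)) :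
    F xt1 + h xt1 ≤
      F xt + h xt - 3 * γ * ρ / 16 * ‖(1 / γ) • (xt - xp)‖ ^ 2 +
        11 * γ / (4 * ρ) * ‖w - u‖ ^ 2 + 11 * Ly ^ 2 * γ / (4 * ρ) * δ ^ 2 := by
  have hψX := hψsc.subset (subset_univ X) hXcv
  have hhX := hh.subset (subset_univ X) hXcv
  have hLF : LF / 2 ≤ 3 * ρ / (8 * γ) := by
    rcases le_or_gt LF 0 with hLF | hLF
    · exact (by linarith : LF / 2 ≤ 0).trans (by positivity)
    · rw [le_div_iff₀ (by positivity)] at hγLF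
      rw [le_div_iff₀ (by positivity)]
      linarith
  have hΦ :=
    add_le_of_isMinOn_mirrorProxObjective hF hFLip hψX (hψdiff xt) hhX hγ hxt1min hxt1 hxt
  have hclose : ‖xt1 - xp‖ ≤ γ / ρ * ‖w - gradF xt‖ :=
    ((strongConvexOn_mirrorProxObjective hψX hhX hγ xt w).norm_sub_le_of_isMinOn
      (strongConvexOn_mirrorProxObjective hψX hhX hγ xt (gradF xt)) (v := w - gradF xt)
      (by positivity) (fun y => by simp only [mirrorProxObjective, inner_sub_left]; ring)
      hxt1min hxpmin hxt1 hxp).trans_eq (by field_simp)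
  set a := ‖xt1 - xt‖
  set c := ‖w - gradF xt‖
  have hG : 3 * γ * ρ / 16 * ‖(1 / γ) • (xt - xp)‖ ^ 2 ≤
      3 * ρ / (8 * γ) * a ^ 2 + 3 * γ / (8 * ρ) * c ^ 2 := by
    have hdist : ‖xt - xp‖ ≤ a + γ / ρ * c :=
      (norm_sub_le_norm_sub_add_norm_sub xt xt1 xp).trans (by rw [norm_sub_rev]; gcongr)
    calc _ = 3 * ρ / (16 * γ) * ‖xt - xp‖ ^ 2 := by
          rw [norm_smul, Real.norm_of_nonneg (by positivity)]
          field_simp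
      _ ≤ 3 * ρ / (16 * γ) * (2 * (a ^ 2 + (γ / ρ * c) ^ 2)) := by
          gcongr
          exact (pow_le_pow_left₀ (norm_nonneg _) hdist 2).trans add_sq_le
      _ = _ := by
          field_simp
          ring
  have herr : c ≤ ‖w - u‖ + Ly * δ :=
    (norm_sub_le_norm_sub_add_norm_sub w u (gradF xt)).trans (by linarith)
  linear_combination hΦ + a ^ 2 * hLF + hG + mul_le_div_mul_sq_add_div_mul_sq hρ hγ a c
    + 11 * γ / (8 * ρ) * (pow_le_pow_left₀ (norm_nonneg _) herr 2).trans add_sq_le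

/-- One-step descent of `Φ = F + h` in terms of the exact generalized gradient `G`:
`Φ(x_{t+1}) ≤ Φ(x_t) − (3γρ/16)‖G‖² + (11γ/(4ρ))‖w − u‖² + (11L_y²γ/(4ρ))δ²`. -/
theorem mirror_descent_objective_decrease_exact_gradient
    (hd₁ : 0 < d₁) (ρ LF : ℝ) (hρ : 0 < ρ)
    (F : E₁ → ℝ) (gradF : E₁ → E₁)
    (hF : ∀ x, HasGradientAt F (gradF x) x)
    (hFLip : ∀ x₁ x₂ : E₁, ‖gradF x₁ - gradF x₂‖ ≤ LF * ‖x₁ - x₂‖)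
    (ψ : E₁ → ℝ) (gψ : E₁ → E₁)
    (hψdiff : ∀ x, HasGradientAt ψ (gψ x) x)
    (hψsc : StrongConvexOn Set.univ ρ ψ)
    (X : Set E₁) (hXne : X.Nonempty) (hXcl : IsClosed X) (hXcv : Convex ℝ X)
    (h : E₁ → ℝ) (hh : ConvexOn ℝ Set.univ h)
    (xt : E₁) (hxt : xt ∈ X) (w u : E₁)
    (Ly δ : ℝ) (hLy : 0 ≤ Ly) (hδ : 0 ≤ δ)
    (hu : ‖u - gradF xt‖ ≤ Ly * δ)
    (γ : ℝ) (hγ : 0 < γ) (hγLF : γ ≤ 3 * ρ / (4 * LF))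
    (xt1 : E₁) (hxt1 : xt1 ∈ X)
    (hxt1min : ∀ z ∈ X,
      ⟪w, xt1⟫ + h xt1 + 1 / γ * (ψ xt1 - ψ xt - ⟪gψ xt, xt1 - xt⟫) ≤
        ⟪w, z⟫ + h z + 1 / γ * (ψ z - ψ xt - ⟪gψ xt, z - xt⟫))
    (xp : E₁) (hxp : xp ∈ X)
    (hxpmin : ∀ z ∈ X,
      ⟪gradF xt, xp⟫ + h xp + 1 / γ * (ψ xp - ψ xt - ⟪gψ xt, xp - xt⟫) ≤
        ⟪gradF xt, z⟫ + h z + 1 / γ * (ψ z - ψ xt - ⟪gψ xt, z - xt⟫)) :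
    F xt1 + h xt1 ≤
      F xt + h xt - 3 * γ * ρ / 16 * ‖(1 / γ) • (xt - xp)‖ ^ 2 +
        11 * γ / (4 * ρ) * ‖w - u‖ ^ 2 + 11 * Ly ^ 2 * γ / (4 * ρ) * δ ^ 2 :=
  mirror_descent_objective_decrease_exact_gradient_general ρ LF hρ F gradF hF hFLip ψ gψ hψdiff hψsc
    X hXcv h hh xt hxt w u Ly δ hu γ hγ hγLF xt1 hxt1 hxt1min xp hxp hxpmin
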